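/- Let f(n) = (4n−1) · [ (4n²+6n+2)/(2(2n+1)²) − (n/(4n+1)) · C(2n,n)²/C(4n,2n) ] for positive integers n, where C(·,·) denotes the binomial coefficient. Then f(n) = 2n − √(2n/π) + O(1) as n → ∞; that is, the sequence f(n) − 2n + √(2n/π) is bounded. (Here f(n) = (4n−1)·ℬ(1,1,n,n+1,n,n+1) is the expected exit time from the square [0,n]² of a step-uniform North/East lattice random walk conditioned to pass through (2n,2n).) -/

import Mathlib

/-! With `c n` the central binomial coefficient, the closed form reads
`f n = 2n + (n - 1)/(2n + 1) - (4n - 1)/(4n + 1) · R n` where `R n = n (c n)² / c (2n)`.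
Wallis' product gives `π n (c n)² ≤ 16ⁿ ≤ π (n + 1/2) (c n)²`; applied at `n` and `2n` this
pins `π (R n)²` within `2` of `2n`, so `(R n)²` is within `1` of `2n/π`, and for nonnegative
reals this forces `|R n - √(2n/π)| ≤ 1`. -/

/-- The expected exit time `(4n−1)·ℬ(1,1,n,n+1,n,n+1)` from the square `[0,n]²` of a
North/East lattice walk conditioned to pass through `(2n,2n)`, in closed form. -/
noncomputable def exitTimeFn (n : ℕ) : ℝ :=
  (4 * n - 1) *
    ((4 * (n:ℝ) ^ 2 + 6 * n + 2) / (2 * (2 * n + 1) ^ 2) -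
      (n / (4 * n + 1)) * ((2 * n).choose n : ℝ) ^ 2 / ((4 * n).choose (2 * n) : ℝ))

open Real Real.Wallis
open Nat (centralBinom)

theorem abs_sub_le_one_of_abs_sq_sub_sq_le_one {x y : ℝ} (hx : 0 ≤ x) (hy : 0 ≤ y)
    (h : |x ^ 2 - y ^ 2| ≤ 1) : |x - y| ≤ 1 := by
  rw [← sq_le_one_iff_abs_le_one]
  have hsum : |x - y| ≤ x + y := abs_sub_le_iff.2 ⟨by linarith, by linarith⟩
  calc (x - y) ^ 2 = |x - y| * |x - y| := by rw [abs_mul_abs_self, sq]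
    _ ≤ |x - y| * (x + y) := by gcongr
    _ = |x ^ 2 - y ^ 2| := by
      rw [sq_sub_sq, abs_mul, abs_of_nonneg (add_nonneg hx hy), mul_comm]
    _ ≤ 1 := h

theorem sq_centralBinom_mul_W (n : ℕ) :
    (centralBinom n : ℝ) ^ 2 * (2 * n + 1) * W n = 16 ^ n := by
  induction n with
  | zero => simp [W]
  | succ n ih =>
    have hn : (n : ℝ) + 1 ≠ 0 := by positivity
    have h : (centralBinom (n + 1) : ℝ) = 2 * (2 * n + 1) * centralBinom n / (n + 1) := by
      rw [eq_div_iff hn, mul_comm]; exact_mod_cast Nat.succ_mul_centralBinom_succ n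
    rw [W_succ, h, pow_succ (16 : ℝ), ← ih]
    field_simp
    push_cast
    ring

theorem pi_mul_sq_centralBinom_le (n : ℕ) : π * n * centralBinom n ^ 2 ≤ 16 ^ n := by
  rw [← sq_centralBinom_mul_W]
  have hW := le_W n
  rw [div_mul_eq_mul_div, div_le_iff₀ (by positivity)] at hW
  have hA : (0 : ℝ) ≤ centralBinom n ^ 2 * (2 * n + 1) := by positivity
  have h4 : (4 : ℝ) * n * (n + 1) ≤ (2 * n + 1) ^ 2 := by nlinarith
  refine le_of_mul_le_mul_right ?_ (by positivity : (0 : ℝ) < 2 * n + 2)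
  nlinarith [mul_le_mul_of_nonneg_left hW hA, sq_nonneg (centralBinom n : ℝ), pi_pos]

theorem le_pi_mul_sq_centralBinom (n : ℕ) : 16 ^ n ≤ π * (n + 1 / 2) * centralBinom n ^ 2 := by
  rw [← sq_centralBinom_mul_W]
  have hA : (0 : ℝ) ≤ centralBinom n ^ 2 * (2 * n + 1) := by positivity
  nlinarith [mul_le_mul_of_nonneg_left (W_le n) hA]

noncomputable def centralBinomRatio (n : ℕ) : ℝ := n * centralBinom n ^ 2 / centralBinom (2 * n)

theorem exitTimeFn_eq_centralBinomRatio (n : ℕ) :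
    exitTimeFn n =
      2 * n + (n - 1) / (2 * n + 1) - (4 * n - 1) / (4 * n + 1) * centralBinomRatio n := by
  have h4 : 4 * n = 2 * (2 * n) := by ring
  rw [exitTimeFn, centralBinomRatio, h4, ← Nat.centralBinom_eq_two_mul_choose,
    ← Nat.centralBinom_eq_two_mul_choose]
  have : (centralBinom (2 * n) : ℝ) ≠ 0 := by exact_mod_cast Nat.centralBinom_ne_zero _
  field_simp
  ring

theorem centralBinomRatio_sq_bounds {n : ℕ} (hn : 1 ≤ n) :
    2 * n - 2 ≤ π * centralBinomRatio n ^ 2 ∧ π * centralBinomRatio n ^ 2 ≤ 2 * n + 1 / 2 := by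
  have hA₁ := pi_mul_sq_centralBinom_le n
  have hA₂ := le_pi_mul_sq_centralBinom n
  have hD₁ := pi_mul_sq_centralBinom_le (2 * n)
  have hD₂ := le_pi_mul_sq_centralBinom (2 * n)
  set A : ℝ := centralBinom n ^ 2
  set D : ℝ := centralBinom (2 * n) ^ 2
  set T : ℝ := 16 ^ n
  have hT : (16 : ℝ) ^ (2 * n) = T ^ 2 := by rw [pow_mul']
  rw [hT] at hD₁ hD₂
  push_cast at hD₁ hD₂
  have hR : π * centralBinomRatio n ^ 2 = π * n ^ 2 * A ^ 2 / D := by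
    simp only [centralBinomRatio, A, D]; ring
  have hD : 0 < D := by have := Nat.centralBinom_pos (2 * n); positivity
  have hN : (1 : ℝ) ≤ n := by exact_mod_cast hn
  rw [hR, le_div_iff₀ hD, div_le_iff₀ hD]
  have hT₀ : 0 ≤ T := by positivity
  have hA₀ : 0 ≤ A := by positivity
  constructor
  · have hsq : T ^ 2 ≤ (π * (n + 1 / 2) * A) ^ 2 := pow_le_pow_left₀ hT₀ hA₂ 2
    have h2n : 2 * n * D ≤ π * (n + 1 / 2) ^ 2 * A ^ 2 := by
      refine le_of_mul_le_mul_left ?_ pi_pos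
      nlinarith
    have hcubic : ((n : ℝ) - 1) * (n + 1 / 2) ^ 2 ≤ n ^ 3 := by nlinarith
    refine le_of_mul_le_mul_left ?_ (by linarith : (0 : ℝ) < n)
    nlinarith [mul_le_mul_of_nonneg_left h2n (by linarith : (0 : ℝ) ≤ n - 1),
      mul_le_mul_of_nonneg_left hcubic (by positivity : 0 ≤ π * A ^ 2)]
  · have hsq : (π * n * A) ^ 2 ≤ T ^ 2 := pow_le_pow_left₀ (by positivity) hA₁ 2
    refine le_of_mul_le_mul_left ?_ pi_pos
    nlinarith

theorem centralBinomRatio_nonneg (n : ℕ) : 0 ≤ centralBinomRatio n := by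
  unfold centralBinomRatio; positivity

theorem centralBinomRatio_le_self {n : ℕ} (hn : 1 ≤ n) : centralBinomRatio n ≤ n := by
  have hN : (1 : ℝ) ≤ n := by exact_mod_cast hn
  nlinarith [(centralBinomRatio_sq_bounds hn).2, pi_gt_three, centralBinomRatio_nonneg n]

theorem abs_centralBinomRatio_sub_sqrt_le_one {n : ℕ} (hn : 1 ≤ n) :
    |centralBinomRatio n - √(2 * n / π)| ≤ 1 := by
  obtain ⟨hlo, hhi⟩ := centralBinomRatio_sq_bounds hn
  refine abs_sub_le_one_of_abs_sq_sub_sq_le_one (centralBinomRatio_nonneg n) (sqrt_nonneg _) ?_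
  have hq : π * (2 * n / π) = 2 * n := mul_div_cancel₀ _ pi_pos.ne'
  rw [sq_sqrt (by positivity), abs_le]
  constructor <;> nlinarith [pi_gt_three]

/-- `f(n) = 2n − √(2n/π) + O(1)` as `n → ∞`, i.e. the sequence
`f(n) − 2n + √(2n/π)` is bounded. -/
theorem stmt14 :
    ∃ C : ℝ, ∀ n : ℕ, 1 ≤ n →
      |exitTimeFn n - (2 * n - Real.sqrt (2 * n / Real.pi))| ≤ C := by
  refine ⟨2, fun n hn => ?_⟩
  have hN : (1 : ℝ) ≤ n := by exact_mod_cast hn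
  have hclose := abs_le.1 (abs_centralBinomRatio_sub_sqrt_le_one hn)
  have hR₀ := centralBinomRatio_nonneg n
  have hR₁ := centralBinomRatio_le_self hn
  have hfrac : 0 ≤ (n - 1 : ℝ) / (2 * n + 1) ∧ (n - 1 : ℝ) / (2 * n + 1) ≤ 1 / 2 := by
    constructor
    · apply div_nonneg <;> linarith
    · rw [div_le_iff₀ (by linarith)]; linarith
  have hcorr : 0 ≤ 2 * centralBinomRatio n / (4 * n + 1) ∧
      2 * centralBinomRatio n / (4 * n + 1) ≤ 1 / 2 := by
    constructor
    · positivity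
    · rw [div_le_iff₀ (by linarith)]; linarith
  have hsplit : exitTimeFn n - (2 * n - √(2 * n / π)) = (n - 1) / (2 * n + 1) -
      (centralBinomRatio n - √(2 * n / π)) + 2 * centralBinomRatio n / (4 * n + 1) := by
    rw [exitTimeFn_eq_centralBinomRatio]; field_simp; ring
  rw [hsplit, abs_le]
  constructor <;> linarith
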